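/- Let A and B be groups, nilpotent of class m and n respectively, and let k ≥ 1. Then the k-nilpotent product A ∗_{n_k} B is a nilpotent group of class at most max{k, m, n}. -/

import Mathlib

open Monoid

open scoped commutatorElement

/-- The verbal subgroup `W(G)`: the subgroup of `G` generated by all evaluations of the
words of `W` at tuples of elements of `G`. -/
def verbalSubgroup (W : Set (FreeGroup ℕ)) (G : Type*) [Group G] : Subgroup G :=
  Subgroup.closure {x | ∃ w ∈ W, ∃ f : ℕ → G, FreeGroup.lift f w = x}

theorem lift_comp_eval {G H : Type*} [Group G] [Group H] (φ : G →* H) (f : ℕ → G)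
    (w : FreeGroup ℕ) : φ (FreeGroup.lift f w) = FreeGroup.lift (φ ∘ f) w := by
  have h : φ.comp (FreeGroup.lift f) = FreeGroup.lift (φ ∘ f) :=
    FreeGroup.ext_hom _ _ (fun a => by simp)
  exact DFunLike.congr_fun h w

theorem verbalSubgroup_map_le {G H : Type*} [Group G] [Group H] (W : Set (FreeGroup ℕ))
    (φ : G →* H) : (verbalSubgroup W G).map φ ≤ verbalSubgroup W H := by
  rw [verbalSubgroup, MonoidHom.map_closure, Subgroup.closure_le]
  rintro x ⟨y, ⟨w, hw, f, rfl⟩, rfl⟩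
  exact Subgroup.subset_closure ⟨w, hw, φ ∘ f, (lift_comp_eval φ f w).symm⟩

/-- Verbal subgroups are normal. -/
instance verbalSubgroup_normal (W : Set (FreeGroup ℕ)) (G : Type*) [Group G] :
    (verbalSubgroup W G).Normal := by
  constructor
  intro n hn g
  have h := verbalSubgroup_map_le (G := G) (H := G) W (MulAut.conj g).toMonoidHom
  have h2 : (MulAut.conj g).toMonoidHom n ∈ verbalSubgroup W G := h ⟨n, hn, rfl⟩
  simpa using h2

/-- The subgroup `[A,B]` of the free product `A ∗ B` generated by the commutators
`[a,b] = a * b * a⁻¹ * b⁻¹` with `a ∈ A`, `b ∈ B`. -/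
def commSubgroup (A B : Type*) [Group A] [Group B] : Subgroup (Coprod A B) :=
  Subgroup.closure {x | ∃ (a : A) (b : B), x = ⁅(Coprod.inl a : Coprod A B), Coprod.inr b⁆}

/-- The kernel of the verbal product: (the normal closure of) `W(A ∗ B) ∩ [A,B]`.
Since `W(A ∗ B) ∩ [A,B]` is in fact a normal subgroup of `A ∗ B`, taking the normal
closure does not change the subgroup. -/
def verbalProductKer (W : Set (FreeGroup ℕ)) (A B : Type*) [Group A] [Group B] :
    Subgroup (Coprod A B) :=
  Subgroup.normalClosure ((verbalSubgroup W (Coprod A B) ⊓ commSubgroup A B : Subgroup _) : Set _)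

instance verbalProductKer_normal (W : Set (FreeGroup ℕ)) (A B : Type*) [Group A] [Group B] :
    (verbalProductKer W A B).Normal := Subgroup.normalClosure_normal

/-- The verbal product `A ∗_W B := (A ∗ B)/(W(A ∗ B) ∩ [A,B])`. -/
abbrev VerbalProduct (W : Set (FreeGroup ℕ)) (A B : Type*) [Group A] [Group B] : Type _ :=
  Coprod A B ⧸ verbalProductKer W A B

/-- The quotient homomorphism `q : A ∗ B → A ∗_W B`. -/
def vq (W : Set (FreeGroup ℕ)) (A B : Type*) [Group A] [Group B] :
    Coprod A B →* VerbalProduct W A B :=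
  QuotientGroup.mk' (verbalProductKer W A B)

/-- The copy of `A` inside the verbal product `A ∗_W B`. -/
def vinl (W : Set (FreeGroup ℕ)) (A B : Type*) [Group A] [Group B] :
    A →* VerbalProduct W A B := (vq W A B).comp Coprod.inl

/-- The copy of `B` inside the verbal product `A ∗_W B`. -/
def vinr (W : Set (FreeGroup ℕ)) (A B : Type*) [Group A] [Group B] :
    B →* VerbalProduct W A B := (vq W A B).comp Coprod.inr

/-- `[A,B]^w`, the image of `[A,B]` in the verbal product `A ∗_W B`. -/
def commW (W : Set (FreeGroup ℕ)) (A B : Type*) [Group A] [Group B] :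
    Subgroup (VerbalProduct W A B) := (commSubgroup A B).map (vq W A B)

/-- The words `n_k` defining nilpotent products: `n_1 = [x_2, x_1]`,
`n_k = [x_{k+1}, n_{k-1}]` (generators indexed from `0`, so `x_i = FreeGroup.of (i-1)`). -/
def nWord : ℕ → FreeGroup ℕ
  | 0 => 1
  | 1 => ⁅FreeGroup.of 1, FreeGroup.of 0⁆
  | (k + 2) => ⁅FreeGroup.of (k + 2), nWord (k + 1)⁆

/-! Let `N = max k m n`. Left-normed commutators of weight `k` are values of `n_k`, so
`γ_N(A ∗ B) ≤ γ_k(A ∗ B)` lies in the verbal subgroup `n_k(A ∗ B)`. It also dies in `A × B`, which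
is nilpotent of class `max m n ≤ N`, and the kernel of `A ∗ B → A × B` is `[A,B]`. Hence
`γ_N(A ∗ B) ≤ n_k(A ∗ B) ∩ [A,B]`, which is exactly what is factored out in `A ∗_{n_k} B`. -/

section Nilpotent

variable {G H : Type*} [Group G] [Group H]

theorem Subgroup.map_top_lowerCentralSeries_of_surjective {f : G →* H}
    (hf : Function.Surjective f) (n : ℕ) :
    ((⊤ : Subgroup G).lowerCentralSeries n).map f = (⊤ : Subgroup H).lowerCentralSeries n := by
  rw [Subgroup.map_lowerCentralSeries, Subgroup.map_top_of_surjective f hf]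

theorem Subgroup.lowerCentralSeries_le_ker_of_surjective {f : G →* H}
    (hf : Function.Surjective f) {n : ℕ} (h : (⊤ : Subgroup H).lowerCentralSeries n = ⊥) :
    (⊤ : Subgroup G).lowerCentralSeries n ≤ f.ker := by
  rw [← Subgroup.map_eq_bot_iff, map_top_lowerCentralSeries_of_surjective hf, h]

theorem QuotientGroup.lowerCentralSeries_eq_bot_of_le {K : Subgroup G} [K.Normal] {n : ℕ}
    (h : (⊤ : Subgroup G).lowerCentralSeries n ≤ K) :
    (⊤ : Subgroup (G ⧸ K)).lowerCentralSeries n = ⊥ := by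
  rw [← Subgroup.map_top_lowerCentralSeries_of_surjective (QuotientGroup.mk'_surjective K),
    Subgroup.map_eq_bot_iff, QuotientGroup.ker_mk']
  exact h

end Nilpotent

section NilpotentWord

variable {G : Type*} [Group G]

theorem nWord_succ {j : ℕ} (hj : j ≠ 0) :
    nWord (j + 1) = ⁅FreeGroup.of (j + 1), nWord j⁆ := by
  obtain ⟨i, rfl⟩ := Nat.exists_eq_succ_of_ne_zero hj
  rfl

theorem lift_nWord_congr {f f' : ℕ → G} :
    ∀ {j : ℕ}, (∀ i ≤ j, f i = f' i) → FreeGroup.lift f (nWord j) = FreeGroup.lift f' (nWord j)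
  | 0, _ => rfl
  | 1, h => by simp [nWord, map_commutatorElement, h 0 zero_le_one, h 1 le_rfl]
  | j + 2, h => by
      simp only [nWord, map_commutatorElement, FreeGroup.lift_apply_of]
      rw [h (j + 2) le_rfl, lift_nWord_congr fun i hi => h i (by omega)]

theorem commutatorElement_mem_verbalSubgroup_nWord_succ {j : ℕ} (hj : j ≠ 0) (g : G) {x : G}
    (hx : x ∈ verbalSubgroup {nWord j} G) : ⁅g, x⁆ ∈ verbalSubgroup {nWord (j + 1)} G := by
  induction hx using Subgroup.closure_induction with
  | mem y hy =>
    obtain ⟨w, rfl, f, rfl⟩ := hy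
    -- `nWord j` only involves the variables `0, …, j`, so `x_{j+1}` is free to be `g`.
    refine Subgroup.subset_closure ⟨_, rfl, Function.update f (j + 1) g, ?_⟩
    rw [nWord_succ hj, map_commutatorElement, FreeGroup.lift_apply_of, Function.update_self,
      lift_nWord_congr (f' := f) fun i hi => Function.update_of_ne (by omega) _ _]
  | one => simp
  | mul x y _ _ hx hy =>
    rw [show ⁅g, x * y⁆ = ⁅g, x⁆ * (x * ⁅g, y⁆ * x⁻¹) by group]
    exact mul_mem hx ((verbalSubgroup_normal _ _).conj_mem _ hy x)
  | inv x _ hx =>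
    rw [show ⁅g, x⁻¹⁆ = x⁻¹ * ⁅g, x⁆⁻¹ * x⁻¹⁻¹ by group]
    exact (verbalSubgroup_normal _ _).conj_mem _ (inv_mem hx) x⁻¹

theorem lowerCentralSeries_le_verbalSubgroup_nWord :
    ∀ {j : ℕ}, j ≠ 0 → (⊤ : Subgroup G).lowerCentralSeries j ≤ verbalSubgroup {nWord j} G
  | 1, _ => by
    rw [Subgroup.lowerCentralSeries_succ, Subgroup.commutator_le]
    rintro a - b -
    refine Subgroup.subset_closure ⟨_, rfl, fun i => if i = 0 then b else a, ?_⟩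
    simp [nWord, map_commutatorElement]
  | j + 2, _ => by
    rw [Subgroup.lowerCentralSeries_succ, Subgroup.commutator_le]
    rintro x hx g -
    rw [← commutatorElement_inv]
    exact inv_mem (commutatorElement_mem_verbalSubgroup_nWord_succ (Nat.succ_ne_zero j) g
      (lowerCentralSeries_le_verbalSubgroup_nWord (Nat.succ_ne_zero j) hx))

end NilpotentWord

theorem Subgroup.closure_normal_of_conj_mem {G : Type*} [Group G] {S T : Set G}
    (hT : Submonoid.closure T = ⊤) (hS : ∀ t ∈ T, ∀ s ∈ S, t * s * t⁻¹ ∈ closure S) :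
    (closure S).Normal := by
  refine ⟨fun x hx g => ?_⟩
  induction (hT ▸ Submonoid.mem_top g : g ∈ Submonoid.closure T) using Submonoid.closure_induction
    generalizing x with
  | mem t ht =>
    induction hx using closure_induction with
    | mem s hs => exact hS t ht s hs
    | one => simp
    | mul x y _ _ hx hy =>
      rw [show t * (x * y) * t⁻¹ = t * x * t⁻¹ * (t * y * t⁻¹) by group]
      exact mul_mem hx hy
    | inv x _ hx =>
      rw [show t * x⁻¹ * t⁻¹ = (t * x * t⁻¹)⁻¹ by group]
      exact inv_mem hx
  | one => simpa
  | mul g h _ _ hg hh =>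
    rw [show g * h * x * (g * h)⁻¹ = g * (h * x * h⁻¹) * g⁻¹ by group]
    exact hg _ (hh x hx)

section CommSubgroup

variable {A B : Type*} [Group A] [Group B]

instance commSubgroup_normal : (commSubgroup A B).Normal := by
  refine Subgroup.closure_normal_of_conj_mem Coprod.mclosure_range_inl_union_inr ?_
  rintro _ (⟨a, rfl⟩ | ⟨b, rfl⟩) _ ⟨c, d, rfl⟩
  · rw [show Coprod.inl a * ⁅(Coprod.inl c : Coprod A B), Coprod.inr d⁆ * (Coprod.inl a)⁻¹ =
        ⁅(Coprod.inl (a * c) : Coprod A B), Coprod.inr d⁆ *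
          ⁅(Coprod.inl a : Coprod A B), Coprod.inr d⁆⁻¹ by rw [map_mul]; group]
    exact mul_mem (Subgroup.subset_closure ⟨_, _, rfl⟩)
      (inv_mem (Subgroup.subset_closure ⟨_, _, rfl⟩))
  · rw [show (Coprod.inr b : Coprod A B) * ⁅Coprod.inl c, Coprod.inr d⁆ * (Coprod.inr b)⁻¹ =
        ⁅(Coprod.inl c : Coprod A B), Coprod.inr b⁆⁻¹ *
          ⁅(Coprod.inl c : Coprod A B), Coprod.inr (b * d)⁆ by rw [map_mul]; group]
    exact mul_mem (inv_mem (Subgroup.subset_closure ⟨_, _, rfl⟩))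
      (Subgroup.subset_closure ⟨_, _, rfl⟩)

theorem ker_toProd_le_commSubgroup :
    (Coprod.toProd : Coprod A B →* A × B).ker ≤ commSubgroup A B := by
  let q := QuotientGroup.mk' (commSubgroup A B)
  have hcomm (a : A) (b : B) : Commute (q (Coprod.inl a)) (q (Coprod.inr b)) := by
    rw [← commutatorElement_eq_one_iff_commute, ← map_commutatorElement,
      QuotientGroup.mk'_apply, QuotientGroup.eq_one_iff]
    exact Subgroup.subset_closure ⟨a, b, rfl⟩
  have hfactor :
      (MonoidHom.noncommCoprod (q.comp Coprod.inl) (q.comp Coprod.inr) hcomm).comp Coprod.toProd =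
        q := by
    ext <;> simp [MonoidHom.noncommCoprod_apply]
  intro x hx
  have hqx : q x = 1 := by rw [← hfactor, MonoidHom.comp_apply, MonoidHom.mem_ker.mp hx, map_one]
  exact (QuotientGroup.eq_one_iff x).mp hqx

end CommSubgroup

/-- The `k`-nilpotent product of nilpotent groups of classes `m` and `n` is nilpotent of
class at most `max {k, m, n}`. -/
theorem nilpotentProduct_isNilpotent {A B : Type*} [Group A] [Group B]
    [Group.IsNilpotent A] [Group.IsNilpotent B] (k m n : ℕ) (hk : 1 ≤ k)
    (hm : Group.nilpotencyClass A = m) (hn : Group.nilpotencyClass B = n) :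
    Group.IsNilpotent (VerbalProduct {nWord k} A B) ∧
    (⊤ : Subgroup (VerbalProduct {nWord k} A B)).lowerCentralSeries (max k (max m n)) = ⊥ := by
  set N := max k (max m n)
  have hprod : (⊤ : Subgroup (A × B)).lowerCentralSeries N = ⊥ := by
    rw [Subgroup.lowerCentralSeries_eq_bot_iff_nilpotencyClass_le, Group.nilpotencyClass_prod,
      hm, hn]
    omega
  have hverbal : (⊤ : Subgroup (Coprod A B)).lowerCentralSeries N ≤
      verbalSubgroup {nWord k} (Coprod A B) :=
    (Subgroup.lowerCentralSeries_antitone _ (le_max_left _ _)).trans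
      (lowerCentralSeries_le_verbalSubgroup_nWord (by omega))
  have hcomm : (⊤ : Subgroup (Coprod A B)).lowerCentralSeries N ≤ commSubgroup A B :=
    (Subgroup.lowerCentralSeries_le_ker_of_surjective Coprod.toProd_surjective hprod).trans
      ker_toProd_le_commSubgroup
  have hbot : (⊤ : Subgroup (VerbalProduct {nWord k} A B)).lowerCentralSeries N = ⊥ :=
    QuotientGroup.lowerCentralSeries_eq_bot_of_le
      ((le_inf hverbal hcomm).trans Subgroup.le_normalClosure)
  exact ⟨Subgroup.nilpotent_iff_lowerCentralSeries.mpr ⟨N, hbot⟩, hbot⟩
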